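/- arXiv:2504.18877 — 3 statements merged into one kernel-verified Lean document; each statement's English description precedes it below -/
import Mathlib

section
/- Let a < b be real numbers, let λ ≤ 0, and let f : ℝ → ℝ be locally Lipschitz with primitive F(s) = ∫₀^s f(t) dt satisfying F(s) ≤ 0 for every s ∈ ℝ. If u : [a,b] → ℝ is twice continuously differentiable on [a,b], satisfies −u''(x) = λ u(x) + f(u(x)) for all x ∈ [a,b], and u(a) = u(b) = 0, then u is identically zero on [a,b]. -/
/-!
With `g s = λ s + f s` and its primitive `G s = λ s² / 2 + F s ≤ 0 = G 0`, the energy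
`u'² / 2 + G(u)` is conserved along the solution. At an interior critical point of `u`
(Rolle) it equals `G(u) ≤ 0`, while at `a` it equals `u'(a)² / 2 ≥ 0`; hence `u'(a) = 0`.
Since `G` is maximal at `0`, `g 0 = 0`, so `(u, u')` and `(0, 0)` solve the same first-order
system with the same initial value, and the field is Lipschitz on the compact range of `u`:
uniqueness of ODE solutions gives `u ≡ 0`.
-/

open MeasureTheory Real Set

lemma eq_zero_of_hasDerivAt_of_nonpos {g G : ℝ → ℝ} (hG : ∀ s, HasDerivAt G (g s) s)
    (hGle : ∀ s, G s ≤ 0) (hG0 : G 0 = 0) : g 0 = 0 :=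
  IsLocalMax.hasDerivAt_eq_zero (.of_forall fun s => (hGle s).trans hG0.ge) (hG 0)

section SecondOrder

variable {a b : ℝ} {g G u u' : ℝ → ℝ}

lemma hasDerivWithinAt_Ici_of_Icc {E : Type*} [NormedAddCommGroup E] [NormedSpace ℝ E]
    {φ : ℝ → E} {φ' : E} {x : ℝ} (hx : x ∈ Ico a b)
    (h : HasDerivWithinAt φ φ' (Icc a b) x) : HasDerivWithinAt φ φ' (Ici x) x :=
  h.mono_of_mem_nhdsWithin (Icc_mem_nhdsGE_of_mem hx)

lemma energy_eq_of_hasDerivWithinAt (hG : ∀ s, HasDerivAt G (g s) s)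
    (hu : ∀ x ∈ Icc a b, HasDerivWithinAt u (u' x) (Icc a b) x)
    (hu' : ∀ x ∈ Icc a b, HasDerivWithinAt u' (-g (u x)) (Icc a b) x) :
    ∀ x ∈ Icc a b, u' x ^ 2 / 2 + G (u x) = u' a ^ 2 / 2 + G (u a) := by
  have hE : ∀ x ∈ Icc a b,
      HasDerivWithinAt (fun y => u' y ^ 2 / 2 + G (u y)) 0 (Icc a b) x := fun x hx => by
    have hkin : HasDerivWithinAt (fun y => u' y ^ 2 / 2) (-(u' x * g (u x))) (Icc a b) x :=
      (((hu' x hx).pow 2).div_const 2).congr_deriv (by push_cast; ring)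
    exact (hkin.add ((hG (u x)).comp_hasDerivWithinAt x (hu x hx))).congr_deriv (by ring)
  exact constant_of_has_deriv_right_zero (fun x hx => (hE x hx).continuousWithinAt)
    fun x hx => hasDerivWithinAt_Ici_of_Icc hx (hE x (Ico_subset_Icc_self hx))

lemma deriv_left_eq_zero_of_primitive_nonpos (hab : a < b) (hG : ∀ s, HasDerivAt G (g s) s)
    (hGle : ∀ s, G s ≤ 0) (hG0 : G 0 = 0)
    (hu : ∀ x ∈ Icc a b, HasDerivWithinAt u (u' x) (Icc a b) x)
    (hu' : ∀ x ∈ Icc a b, HasDerivWithinAt u' (-g (u x)) (Icc a b) x)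
    (ha : u a = 0) (hb : u b = 0) : u' a = 0 := by
  obtain ⟨c, hc, hc0⟩ := exists_hasDerivAt_eq_zero hab
    (fun x hx => (hu x hx).continuousWithinAt) (ha.trans hb.symm)
    fun x hx => (hu x (Ioo_subset_Icc_self hx)).hasDerivAt (Icc_mem_nhds hx.1 hx.2)
  have hE := energy_eq_of_hasDerivWithinAt hG hu hu' c (Ioo_subset_Icc_self hc)
  rw [hc0, ha, hG0] at hE
  nlinarith [hGle (u c), sq_nonneg (u' a)]

lemma eqOn_zero_of_lipschitzOnWith {s : Set ℝ} {K : NNReal} (hg : LipschitzOnWith K g s)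
    (hg0 : g 0 = 0) (hs0 : 0 ∈ s) (hus : MapsTo u (Icc a b) s)
    (hu : ∀ x ∈ Icc a b, HasDerivWithinAt u (u' x) (Icc a b) x)
    (hu' : ∀ x ∈ Icc a b, HasDerivWithinAt u' (-g (u x)) (Icc a b) x)
    (ha : u a = 0) (ha' : u' a = 0) : EqOn u 0 (Icc a b) := by
  have hgfst : LipschitzOnWith K (fun p : ℝ × ℝ => -g p.1) (s ×ˢ univ) := by
    have h := (hg.comp (LipschitzWith.prod_fst (β := ℝ)).lipschitzOnWith
      (mapsTo_fst_prod (t := univ))).neg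
    rwa [mul_one] at h
  have hV : LipschitzOnWith (max 1 K) (fun p : ℝ × ℝ => (p.2, -g p.1)) (s ×ˢ univ) :=
    (LipschitzWith.prod_snd (α := ℝ) (β := ℝ)).lipschitzOnWith.prodMk hgfst
  have hw : ∀ x ∈ Icc a b,
      HasDerivWithinAt (fun y => (u y, u' y)) (u' x, -g (u x)) (Icc a b) x :=
    fun x hx => (hu x hx).prodMk (hu' x hx)
  have key := ODE_solution_unique_of_mem_Icc_right (fun _ _ => hV)
    (fun x hx => (hw x hx).continuousWithinAt)
    (fun x hx => hasDerivWithinAt_Ici_of_Icc hx (hw x (Ico_subset_Icc_self hx)))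
    (fun x hx => ⟨hus (Ico_subset_Icc_self hx), mem_univ _⟩)
    (continuousOn_const (c := ((0 : ℝ), (0 : ℝ))))
    (fun x _ => (hasDerivWithinAt_const x (Ici x) _).congr_deriv (Prod.ext rfl (by simp [hg0])))
    (fun _ _ => ⟨hs0, mem_univ _⟩) (Prod.ext ha ha')
  exact fun x hx => congrArg Prod.fst (key hx)

end SecondOrder

theorem stmt1_general (a b : ℝ) (hab : a < b) (lam : ℝ) (hlam : lam ≤ 0)
    (f : ℝ → ℝ) (hf : LocallyLipschitz f)
    (hF : ∀ s : ℝ, (∫ t in (0:ℝ)..s, f t) ≤ 0)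
    (u u' u'' : ℝ → ℝ)
    (hderiv1 : ∀ x ∈ Set.Icc a b, HasDerivWithinAt u (u' x) (Set.Icc a b) x)
    (hderiv2 : ∀ x ∈ Set.Icc a b, HasDerivWithinAt u' (u'' x) (Set.Icc a b) x)
    (heq : ∀ x ∈ Set.Icc a b, -u'' x = lam * u x + f (u x))
    (hua : u a = 0) (hub : u b = 0) :
    ∀ x ∈ Set.Icc a b, u x = 0 := by
  set g : ℝ → ℝ := fun s => lam * s + f s
  set G : ℝ → ℝ := fun s => lam * s ^ 2 / 2 + ∫ t in (0:ℝ)..s, f t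
  have hG : ∀ s, HasDerivAt G (g s) s := fun s =>
    (((hasDerivAt_pow 2 s).const_mul lam).div_const 2).add
      (hf.continuous.integral_hasStrictDerivAt 0 s).hasDerivAt |>.congr_deriv (by push_cast; ring)
  have hGle : ∀ s, G s ≤ 0 := fun s =>
    add_nonpos (by nlinarith [sq_nonneg s]) (hF s)
  have hG0 : G 0 = 0 := by simp [G]
  have hu' : ∀ x ∈ Icc a b, HasDerivWithinAt u' (-g (u x)) (Icc a b) x := fun x hx =>
    (hderiv2 x hx).congr_deriv (by simp only [g, ← heq x hx, neg_neg])
  have hua' := deriv_left_eq_zero_of_primitive_nonpos hab hG hGle hG0 hderiv1 hu' hua hub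
  obtain ⟨K, hK⟩ := ((lipschitzWith_smul lam).locallyLipschitz.add hf).locallyLipschitzOn
    |>.exists_lipschitzOnWith_of_compact
      (isCompact_Icc.image_of_continuousOn fun x hx => (hderiv1 x hx).continuousWithinAt)
  exact eqOn_zero_of_lipschitzOnWith hK (eq_zero_of_hasDerivAt_of_nonpos hG hGle hG0)
    ⟨a, left_mem_Icc.2 hab.le, hua⟩ (mapsTo_image u _) hderiv1 hu' hua hua'

/-- One-dimensional uniqueness (Lemma 2.1, case `λ ≤ 0`): if `f` is locally Lipschitz
with nonpositive primitive and `u` is a `C²` solution of `−u'' = λu + f(u)` on `[a,b]`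
with `u(a) = u(b) = 0` and `λ ≤ 0`, then `u ≡ 0` on `[a,b]`. -/
theorem stmt1 (a b : ℝ) (hab : a < b) (lam : ℝ) (hlam : lam ≤ 0)
    (f : ℝ → ℝ) (hf : LocallyLipschitz f)
    (hF : ∀ s : ℝ, (∫ t in (0:ℝ)..s, f t) ≤ 0)
    (u u' u'' : ℝ → ℝ)
    (hderiv1 : ∀ x ∈ Set.Icc a b, HasDerivWithinAt u (u' x) (Set.Icc a b) x)
    (hderiv2 : ∀ x ∈ Set.Icc a b, HasDerivWithinAt u' (u'' x) (Set.Icc a b) x)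
    (hcont : ContinuousOn u'' (Set.Icc a b))
    (heq : ∀ x ∈ Set.Icc a b, -u'' x = lam * u x + f (u x))
    (hua : u a = 0) (hub : u b = 0) :
    ∀ x ∈ Set.Icc a b, u x = 0 :=
  stmt1_general a b hab lam hlam f hf hF u u' u'' hderiv1 hderiv2 heq hua hub
end

section
/- Let a < b and λ be real numbers satisfying 0 < λ < π²/(b−a)². Then there exists a unique M > 0 such that ∫₀¹ ds / √(M s²(1−s)² + λ(1−s²)) = (b−a)/2. -/
open MeasureTheory Real Set Filter Topology

/-! For fixed `λ > 0` the integral `F(M)` is continuous and strictly decreasing in `M ≥ 0`, by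
dominated convergence with the dominating function `1 / √(λ (1 - s²))`, and tends to `0` as
`M → ∞`. At `M = 0` it equals `λ^(-1/2) ∫₀¹ ds / √(1 - s²) = π / (2 √λ)` (an arcsine integral),
which exceeds `(b - a) / 2` exactly when `λ < π² / (b - a)²`. The intermediate value theorem then
gives `M`, and strict monotonicity its uniqueness. -/

lemma one_div_sqrt_mul_add_le {M p q : ℝ} (hM : 0 ≤ M) (hp : 0 ≤ p) (hq : 0 < q) :
    1 / √(M * p + q) ≤ 1 / √q := by
  gcongr
  exact le_add_of_nonneg_left (by positivity)

lemma one_div_sqrt_mul_add_lt_of_lt {M M' p q : ℝ} (hM : 0 ≤ M) (hMM' : M < M') (hp : 0 < p)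
    (hq : 0 < q) : 1 / √(M' * p + q) < 1 / √(M * p + q) := by
  gcongr

lemma tendsto_one_div_sqrt_mul_add_atTop {p : ℝ} (hp : 0 < p) (q : ℝ) :
    Tendsto (fun M : ℝ => 1 / √(M * p + q)) atTop (𝓝 0) :=
  tendsto_const_nhds.div_atTop <| tendsto_sqrt_atTop.comp <|
    tendsto_atTop_add_const_right _ _ (tendsto_id.atTop_mul_const hp)

namespace MeasureTheory

variable {α : Type*} [MeasurableSpace α] {μ : Measure α}

lemma integral_lt_integral_of_ae_lt [NeZero μ] {f g : α → ℝ} (hf : Integrable f μ)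
    (hg : Integrable g μ) (hfg : ∀ᵐ x ∂μ, f x < g x) : ∫ x, f x ∂μ < ∫ x, g x ∂μ := by
  rw [← sub_pos, ← integral_sub hg hf,
    integral_pos_iff_support_of_nonneg_ae (hfg.mono fun x hx => (sub_pos.2 hx).le) (hg.sub hf),
    pos_iff_ne_zero]
  intro hnull
  obtain ⟨x, hlt, hx⟩ := (hfg.and (measure_eq_zero_iff_ae_notMem.1 hnull)).exists
  exact hx (sub_ne_zero.2 hlt.ne')

end MeasureTheory

section InvSqrtIntegral

variable {α : Type*} [MeasurableSpace α] {μ : Measure α} {p q : α → ℝ}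

noncomputable def invSqrtIntegral (μ : Measure α) (p q : α → ℝ) (M : ℝ) : ℝ :=
  ∫ x, 1 / √(M * p x + q x) ∂μ

lemma aestronglyMeasurable_one_div_sqrt_mul_add (hpm : AEMeasurable p μ)
    (hqm : AEMeasurable q μ) (M : ℝ) :
    AEStronglyMeasurable (fun x => 1 / √(M * p x + q x)) μ :=
  (by fun_prop : AEMeasurable (fun x => 1 / √(M * p x + q x)) μ).aestronglyMeasurable

lemma ae_norm_one_div_sqrt_mul_add_le (hp : ∀ᵐ x ∂μ, 0 ≤ p x) (hq : ∀ᵐ x ∂μ, 0 < q x)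
    {M : ℝ} (hM : 0 ≤ M) : ∀ᵐ x ∂μ, ‖1 / √(M * p x + q x)‖ ≤ 1 / √(q x) := by
  filter_upwards [hp, hq] with x hpx hqx
  rw [norm_of_nonneg (by positivity)]
  exact one_div_sqrt_mul_add_le hM hpx hqx

lemma integrable_one_div_sqrt_mul_add (hpm : AEMeasurable p μ) (hqm : AEMeasurable q μ)
    (hp : ∀ᵐ x ∂μ, 0 ≤ p x) (hq : ∀ᵐ x ∂μ, 0 < q x)
    (hint : Integrable (fun x => 1 / √(q x)) μ) {M : ℝ} (hM : 0 ≤ M) :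
    Integrable (fun x => 1 / √(M * p x + q x)) μ :=
  hint.mono' (aestronglyMeasurable_one_div_sqrt_mul_add hpm hqm M)
    (ae_norm_one_div_sqrt_mul_add_le hp hq hM)

lemma continuousOn_invSqrtIntegral (hpm : AEMeasurable p μ) (hqm : AEMeasurable q μ)
    (hp : ∀ᵐ x ∂μ, 0 ≤ p x) (hq : ∀ᵐ x ∂μ, 0 < q x)
    (hint : Integrable (fun x => 1 / √(q x)) μ) :
    ContinuousOn (invSqrtIntegral μ p q) (Ici 0) := by
  refine continuousOn_of_dominated
    (fun M _ => aestronglyMeasurable_one_div_sqrt_mul_add hpm hqm M)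
    (fun _ hM => ae_norm_one_div_sqrt_mul_add_le hp hq hM) hint ?_
  filter_upwards [hp, hq] with x hpx hqx
  refine ContinuousOn.div continuousOn_const (by fun_prop) fun M (hM : 0 ≤ M) => ?_
  positivity

lemma strictAntiOn_invSqrtIntegral [NeZero μ] (hpm : AEMeasurable p μ)
    (hqm : AEMeasurable q μ) (hp : ∀ᵐ x ∂μ, 0 < p x) (hq : ∀ᵐ x ∂μ, 0 < q x)
    (hint : Integrable (fun x => 1 / √(q x)) μ) :
    StrictAntiOn (invSqrtIntegral μ p q) (Ici 0) := by
  have hp' : ∀ᵐ x ∂μ, 0 ≤ p x := hp.mono fun _ => le_of_lt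
  intro M hM M' hM' hMM'
  refine integral_lt_integral_of_ae_lt
    (integrable_one_div_sqrt_mul_add hpm hqm hp' hq hint hM')
    (integrable_one_div_sqrt_mul_add hpm hqm hp' hq hint hM) ?_
  filter_upwards [hp, hq] with x hpx hqx
  exact one_div_sqrt_mul_add_lt_of_lt hM hMM' hpx hqx

lemma tendsto_invSqrtIntegral_atTop (hpm : AEMeasurable p μ) (hqm : AEMeasurable q μ)
    (hp : ∀ᵐ x ∂μ, 0 < p x) (hq : ∀ᵐ x ∂μ, 0 < q x)
    (hint : Integrable (fun x => 1 / √(q x)) μ) :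
    Tendsto (invSqrtIntegral μ p q) atTop (𝓝 0) := by
  have hp' : ∀ᵐ x ∂μ, 0 ≤ p x := hp.mono fun _ => le_of_lt
  have := tendsto_integral_filter_of_dominated_convergence _
    (Eventually.of_forall (aestronglyMeasurable_one_div_sqrt_mul_add hpm hqm))
    ((eventually_ge_atTop 0).mono fun _ hM => ae_norm_one_div_sqrt_mul_add_le hp' hq hM) hint
    (hp.mono fun x hpx => tendsto_one_div_sqrt_mul_add_atTop hpx (q x))
  rwa [integral_zero] at this

theorem existsUnique_invSqrtIntegral_eq [NeZero μ] (hpm : AEMeasurable p μ)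
    (hqm : AEMeasurable q μ) (hp : ∀ᵐ x ∂μ, 0 < p x) (hq : ∀ᵐ x ∂μ, 0 < q x)
    (hint : Integrable (fun x => 1 / √(q x)) μ) {c : ℝ} (hc : 0 < c)
    (hc' : c < ∫ x, 1 / √(q x) ∂μ) :
    ∃! M, 0 < M ∧ invSqrtIntegral μ p q M = c := by
  have hF0 : invSqrtIntegral μ p q 0 = ∫ x, 1 / √(q x) ∂μ := by simp [invSqrtIntegral]
  have hanti := strictAntiOn_invSqrtIntegral hpm hqm hp hq hint
  obtain ⟨M₁, hM₁, hM₁pos⟩ := ((tendsto_invSqrtIntegral_atTop hpm hqm hp hq hint).eventually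
    (eventually_lt_nhds hc) |>.and (eventually_ge_atTop 0)).exists
  have hcont := (continuousOn_invSqrtIntegral hpm hqm (hp.mono fun _ => le_of_lt) hq hint).mono
    (Icc_subset_Ici_self : Icc 0 M₁ ⊆ Ici 0)
  obtain ⟨M, hM, hFM⟩ := intermediate_value_Icc' hM₁pos hcont ⟨hM₁.le, hF0 ▸ hc'.le⟩
  have hMpos : 0 < M := hM.1.lt_of_ne fun h => by subst h; exact hc'.ne' (hF0 ▸ hFM)
  refine ⟨M, ⟨hMpos, hFM⟩, fun M' ⟨hM'pos, hFM'⟩ => ?_⟩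
  exact hanti.injOn hM'pos.le (mem_Ici.2 hM.1) (hFM'.trans hFM.symm)

end InvSqrtIntegral

lemma integrableOn_one_div_sqrt_one_sub_sq :
    IntegrableOn (fun s : ℝ => 1 / √(1 - s ^ 2)) (Ioc 0 1) :=
  intervalIntegral.integrableOn_deriv_of_nonneg continuous_arcsin.continuousOn
    (fun s hs => hasDerivAt_arcsin (by linarith [hs.1]) hs.2.ne) fun _ _ => by positivity

lemma integral_Ioo_one_div_sqrt_one_sub_sq :
    ∫ s in Ioo (0 : ℝ) 1, 1 / √(1 - s ^ 2) = π / 2 := by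
  rw [← integral_Ioc_eq_integral_Ioo, ← intervalIntegral.integral_of_le zero_le_one,
    intervalIntegral.integral_eq_sub_of_hasDerivAt_of_le zero_le_one
      continuous_arcsin.continuousOn
      (fun s hs => hasDerivAt_arcsin (by linarith [hs.1]) hs.2.ne)
      ((intervalIntegrable_iff_integrableOn_Ioc_of_le zero_le_one).2
        integrableOn_one_div_sqrt_one_sub_sq)]
  simp

lemma one_div_sqrt_const_mul (lam x : ℝ) (hlam : 0 ≤ lam) :
    1 / √(lam * x) = (√lam)⁻¹ * (1 / √x) := by
  rw [sqrt_mul hlam, one_div, mul_inv, one_div]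

/-- Lemma 2.4: for `0 < λ < π²/(b−a)²` there is a unique `M > 0` with
`∫₀¹ ds/√(M s²(1−s)² + λ(1−s²)) = (b−a)/2`. -/
theorem stmt5 (a b lam : ℝ) (hab : a < b) (hlam : 0 < lam)
    (hlam' : lam < Real.pi ^ 2 / (b - a) ^ 2) :
    ∃! M : ℝ, 0 < M ∧
      (∫ s in Set.Ioo (0:ℝ) 1,
          1 / Real.sqrt (M * s ^ 2 * (1 - s) ^ 2 + lam * (1 - s ^ 2)))
        = (b - a) / 2 := by
  have hq : ∀ s ∈ Ioo (0 : ℝ) 1, 0 < lam * (1 - s ^ 2) := fun s hs =>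
    mul_pos hlam (by nlinarith [hs.1, hs.2])
  have hint : IntegrableOn (fun s => 1 / √(lam * (1 - s ^ 2))) (Ioo 0 1) := by
    simp_rw [one_div_sqrt_const_mul _ _ hlam.le]
    exact (integrableOn_one_div_sqrt_one_sub_sq.mono_set Ioo_subset_Ioc_self).const_mul _
  have hval : ∫ s in Ioo (0 : ℝ) 1, 1 / √(lam * (1 - s ^ 2)) = π / (2 * √lam) := by
    simp_rw [one_div_sqrt_const_mul _ _ hlam.le]
    rw [integral_const_mul, integral_Ioo_one_div_sqrt_one_sub_sq]
    field_simp
  have hlt : (b - a) / 2 < π / (2 * √lam) := by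
    have : √lam * (b - a) < π := by
      rw [← lt_div_iff₀ (sub_pos.2 hab), sqrt_lt' (by positivity), div_pow]
      exact hlam'
    rw [div_lt_div_iff₀ two_pos (by positivity)]
    nlinarith
  have : NeZero (volume.restrict (Ioo (0 : ℝ) 1)) := ⟨by simp⟩
  have hexists := existsUnique_invSqrtIntegral_eq (μ := volume.restrict (Ioo (0 : ℝ) 1))
    (p := fun s => s ^ 2 * (1 - s) ^ 2) (by fun_prop) (by fun_prop)
    ((ae_restrict_iff' measurableSet_Ioo).2 (Eventually.of_forall fun s hs =>
      mul_pos (pow_pos hs.1 2) (pow_pos (sub_pos.2 hs.2) 2)))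
    ((ae_restrict_iff' measurableSet_Ioo).2 (Eventually.of_forall hq)) hint
    (half_pos (sub_pos.2 hab)) (hval ▸ hlt)
  simpa only [invSqrtIntegral, mul_assoc] using hexists
end

section
/- Let a < b and λ be real numbers with 0 < λ < π²/(b−a)², let M > 0 satisfy ∫₀¹ ds / √(M s²(1−s)² + λ(1−s²)) = (b−a)/2, let Ψ : [0,1] → [a,(a+b)/2] be defined by Ψ(t) = a + ∫₀^t ds / √(M s²(1−s)² + λ(1−s²)), and let u : [a,(a+b)/2] → [0,1] be the inverse function of Ψ. Then u is continuously differentiable on [a,(a+b)/2] with u(a) = 0, u((a+b)/2) = 1, u'(x) = √(M u(x)²(1−u(x))² + λ(1−u(x)²)) for every x ∈ [a,(a+b)/2), and u'((a+b)/2) = 0. -/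
/-!
`Ψ` is continuous on the compact interval `[0,1]`, so its inverse `u` is continuous. Where
`Ψ' = 1/√(M t²(1-t)² + λ(1-t²))` is finite, i.e. on `[0,1)`, the inverse function theorem gives
`u' = √(M u²(1-u)² + λ(1-u²))`. At `(a+b)/2` the derivative of `Ψ` blows up, and `u'((a+b)/2) = 0`
is obtained instead as the limit of `u'`, which exists because `u` is continuous.
-/

open MeasureTheory Real Set Filter Topology

theorem IsCompact.continuousOn_image_of_leftInvOn {α β : Type*} [TopologicalSpace α]
    [TopologicalSpace β] [T2Space β] {f : α → β} {g : β → α} {K : Set α} (hK : IsCompact K)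
    (hf : ContinuousOn f K) (hgf : LeftInvOn g f K) : ContinuousOn g (f '' K) := by
  refine continuousOn_iff_isClosed.2 fun C hC => ⟨f '' (C ∩ K), ?_, ?_⟩
  · exact ((hK.inter_left hC).image_of_continuousOn (hf.mono inter_subset_right)).isClosed
  · ext y
    constructor
    · rintro ⟨hyC, x, hxK, rfl⟩
      exact ⟨⟨x, ⟨by rwa [mem_preimage, hgf hxK] at hyC, hxK⟩, rfl⟩, x, hxK, rfl⟩
    · rintro ⟨⟨x, ⟨hxC, hxK⟩, rfl⟩, hy⟩
      exact ⟨by rwa [mem_preimage, hgf hxK], hy⟩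

theorem HasDerivWithinAt.of_local_left_inverse {f g : ℝ → ℝ} {f' a : ℝ} {s t : Set ℝ}
    (hg : Tendsto g (𝓝[s] a) (𝓝[t] (g a))) (hf : HasDerivWithinAt f f' t (g a))
    (hf' : f' ≠ 0) (ha : a ∈ s) (hfg : ∀ᶠ y in 𝓝[s] a, f (g y) = y) :
    HasDerivWithinAt g f'⁻¹ s a :=
  HasFDerivWithinAt.of_local_left_inverse
    (f' := ContinuousLinearEquiv.unitsEquivAut ℝ (Units.mk0 f' hf')) hg hf ha hfg

theorem hasDerivWithinAt_Icc_right_of_continuousWithinAt {u u' : ℝ → ℝ} {p q : ℝ} (hpq : p < q)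
    (hu : ContinuousWithinAt u (Icc p q) q) (hu' : ContinuousWithinAt u' (Icc p q) q)
    (hd : ∀ x ∈ Ioo p q, HasDerivWithinAt u (u' x) (Icc p q) x) :
    HasDerivWithinAt u (u' q) (Icc p q) q := by
  have hd' : ∀ x ∈ Ioo p q, HasDerivAt u (u' x) x := fun x hx =>
    (hd x hx).hasDerivAt (Icc_mem_nhds hx.1 hx.2)
  refine (hasDerivWithinAt_Iic_of_tendsto_deriv (s := Ioo p q) (fun x hx => ?_)
    (hu.mono Ioo_subset_Icc_self) (Ioo_mem_nhdsLT hpq) ?_).mono Icc_subset_Iic_self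
  · exact (hd' x hx).differentiableAt.differentiableWithinAt
  · rw [← nhdsWithin_Ioo_eq_nhdsLT hpq]
    refine (hu'.mono Ioo_subset_Icc_self).congr' ?_
    filter_upwards [self_mem_nhdsWithin] with x hx
    exact ((hd' x hx).deriv).symm

theorem continuousOn_of_eqOn_primitive {f F : ℝ → ℝ} {c p q : ℝ} (hpq : p ≤ q)
    (hF : ∀ x ∈ Icc p q, F x = c + ∫ s in p..x, f s) (hint : IntervalIntegrable f volume p q) :
    ContinuousOn F (Icc p q) := by
  have := (intervalIntegral.continuousOn_primitive_interval' hint left_mem_uIcc).const_add c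
  rw [uIcc_of_le hpq] at this
  exact this.congr hF

theorem hasDerivWithinAt_of_eqOn_primitive {f F : ℝ → ℝ} {c p q t : ℝ}
    (hF : ∀ x ∈ Icc p q, F x = c + ∫ s in p..x, f s) (hint : IntervalIntegrable f volume p q)
    (hmeas : StronglyMeasurableAtFilter f (𝓝 t)) (hf : ContinuousAt f t) (ht : t ∈ Icc p q) :
    HasDerivWithinAt F (f t) (Icc p q) t := by
  have hint' : IntervalIntegrable f volume p t := hint.mono_set <| by
    rw [uIcc_of_le ht.1, uIcc_of_le (ht.1.trans ht.2)]
    exact Icc_subset_Icc_right ht.2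
  exact ((intervalIntegral.integral_hasDerivAt_right hint' hmeas hf).const_add c
    |>.hasDerivWithinAt).congr_of_mem hF ht

def speedSq (M lam s : ℝ) : ℝ := M * s ^ 2 * (1 - s) ^ 2 + lam * (1 - s ^ 2)

section speedSq

variable {M lam : ℝ}

theorem speedSq_pos {s : ℝ} (hM : 0 ≤ M) (hlam : 0 < lam) (hs₀ : 0 ≤ s) (hs₁ : s < 1) :
    0 < speedSq M lam s := by
  unfold speedSq
  have : 0 < 1 - s ^ 2 := by nlinarith
  positivity

theorem speedSq_one : speedSq M lam 1 = 0 := by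
  simp [speedSq]

theorem continuous_speedSq : Continuous (speedSq M lam) := by
  unfold speedSq; fun_prop

theorem hasDerivWithinAt_of_eqOn_primitive_inv_sqrt_speedSq {Ψ : ℝ → ℝ} {c t : ℝ} (hM : 0 ≤ M)
    (hlam : 0 < lam) (hΨ : ∀ x ∈ Icc (0:ℝ) 1, Ψ x = c + ∫ s in (0:ℝ)..x, 1 / √(speedSq M lam s))
    (hint : IntervalIntegrable (fun s => 1 / √(speedSq M lam s)) volume 0 1) (ht : t ∈ Ico 0 1) :
    HasDerivWithinAt Ψ (1 / √(speedSq M lam t)) (Icc 0 1) t :=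
  hasDerivWithinAt_of_eqOn_primitive hΨ hint
    ((measurable_const.div continuous_speedSq.measurable.sqrt).aestronglyMeasurable
      |>.stronglyMeasurableAtFilter)
    (continuousAt_const.div continuous_speedSq.continuousAt.sqrt
      (sqrt_pos.2 (speedSq_pos hM hlam ht.1 ht.2)).ne')
    (Ico_subset_Icc_self ht)

end speedSq

theorem stmt12_general (a b lam : ℝ) (hab : a < b) (hlam : 0 < lam)
    (M : ℝ) (hM : 0 < M)
    (hMint : (∫ s in (0:ℝ)..1,
        1 / Real.sqrt (M * s ^ 2 * (1 - s) ^ 2 + lam * (1 - s ^ 2)))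
      = (b - a) / 2)
    (Ψ : ℝ → ℝ)
    (hΨ : ∀ t ∈ Set.Icc (0:ℝ) 1, Ψ t = a + ∫ s in (0:ℝ)..t,
        1 / Real.sqrt (M * s ^ 2 * (1 - s) ^ 2 + lam * (1 - s ^ 2)))
    (u : ℝ → ℝ)
    (hmaps : Set.MapsTo u (Set.Icc a ((a + b) / 2)) (Set.Icc 0 1))
    (hleft : ∀ t ∈ Set.Icc (0:ℝ) 1, u (Ψ t) = t)
    (hright : ∀ x ∈ Set.Icc a ((a + b) / 2), Ψ (u x) = x) :
    u a = 0 ∧ u ((a + b) / 2) = 1 ∧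
    ∃ u' : ℝ → ℝ,
      ContinuousOn u' (Set.Icc a ((a + b) / 2)) ∧
      (∀ x ∈ Set.Icc a ((a + b) / 2),
        HasDerivWithinAt u (u' x) (Set.Icc a ((a + b) / 2)) x) ∧
      (∀ x ∈ Set.Ico a ((a + b) / 2),
        u' x = Real.sqrt (M * (u x) ^ 2 * (1 - u x) ^ 2 + lam * (1 - (u x) ^ 2))) ∧
      u' ((a + b) / 2) = 0 := by
  set m := (a + b) / 2
  -- the integral in `hMint` is nonzero, and non-integrable functions have integral `0`
  have hint : IntervalIntegrable (fun s => 1 / √(speedSq M lam s)) volume 0 1 :=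
    intervalIntegral.intervalIntegrable_of_integral_ne_zero <| by
      rw [show (∫ s in (0:ℝ)..1, 1 / √(speedSq M lam s)) = _ from hMint]; linarith
  have hΨ1 : Ψ 1 = m := by rw [hΨ 1 (right_mem_Icc.2 zero_le_one), hMint]; ring
  have hum : u m = 1 := hΨ1 ▸ hleft 1 (right_mem_Icc.2 zero_le_one)
  have hucont : ContinuousOn u (Icc a m) :=
    (isCompact_Icc.continuousOn_image_of_leftInvOn
      (continuousOn_of_eqOn_primitive zero_le_one hΨ hint) hleft).mono
      fun x hx => ⟨u x, hmaps hx, hright x hx⟩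
  have hderiv : ∀ x ∈ Ico a m, HasDerivWithinAt u (√(speedSq M lam (u x))) (Icc a m) x := by
    intro x hx
    have hxI : x ∈ Icc a m := Ico_subset_Icc_self hx
    have hux : u x ∈ Ico 0 1 :=
      ⟨(hmaps hxI).1, (hmaps hxI).2.lt_of_ne fun h => hx.2.ne (by rw [← hright x hxI, h, hΨ1])⟩
    have hpos := speedSq_pos hM.le hlam hux.1 hux.2
    simpa using (hasDerivWithinAt_of_eqOn_primitive_inv_sqrt_speedSq hM.le hlam hΨ hint hux)
      |>.of_local_left_inverse ((hucont x hxI).tendsto_nhdsWithin hmaps) (by positivity) hxI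
        (eventually_nhdsWithin_of_forall hright)
  have hu'cont : ContinuousOn (fun x => √(speedSq M lam (u x))) (Icc a m) :=
    (continuous_speedSq.comp_continuousOn hucont).sqrt
  refine ⟨by simpa [hΨ 0 (left_mem_Icc.2 zero_le_one)] using hleft 0 (left_mem_Icc.2 zero_le_one),
    hum, _, hu'cont, fun x hx => ?_, fun x _ => rfl, by simp [hum, speedSq_one]⟩
  rcases hx.2.lt_or_eq with hxm | rfl
  · exact hderiv x ⟨hx.1, hxm⟩
  · exact hasDerivWithinAt_Icc_right_of_continuousWithinAt (left_lt_add_div_two.2 hab)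
      (hucont _ hx) (hu'cont _ hx) fun y hy => hderiv y (Ioo_subset_Ico_self hy)

/-- Part of the proof of Theorem 2.3: the inverse `u` of
`Ψ(t) = a + ∫₀ᵗ ds/√(M s²(1−s)² + λ(1−s²))` is continuously differentiable on
`[a,(a+b)/2]`, with `u(a) = 0`, `u((a+b)/2) = 1`,
`u'(x) = √(M u(x)²(1−u(x))² + λ(1−u(x)²))` on `[a,(a+b)/2)` and `u'((a+b)/2) = 0`. -/
theorem stmt12 (a b lam : ℝ) (hab : a < b) (hlam : 0 < lam)
    (hlam' : lam < Real.pi ^ 2 / (b - a) ^ 2)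
    (M : ℝ) (hM : 0 < M)
    (hMint : (∫ s in (0:ℝ)..1,
        1 / Real.sqrt (M * s ^ 2 * (1 - s) ^ 2 + lam * (1 - s ^ 2)))
      = (b - a) / 2)
    (Ψ : ℝ → ℝ)
    (hΨ : ∀ t ∈ Set.Icc (0:ℝ) 1, Ψ t = a + ∫ s in (0:ℝ)..t,
        1 / Real.sqrt (M * s ^ 2 * (1 - s) ^ 2 + lam * (1 - s ^ 2)))
    (hbij : Set.BijOn Ψ (Set.Icc 0 1) (Set.Icc a ((a + b) / 2)))
    (u : ℝ → ℝ)
    (hmaps : Set.MapsTo u (Set.Icc a ((a + b) / 2)) (Set.Icc 0 1))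
    (hleft : ∀ t ∈ Set.Icc (0:ℝ) 1, u (Ψ t) = t)
    (hright : ∀ x ∈ Set.Icc a ((a + b) / 2), Ψ (u x) = x) :
    u a = 0 ∧ u ((a + b) / 2) = 1 ∧
    ∃ u' : ℝ → ℝ,
      ContinuousOn u' (Set.Icc a ((a + b) / 2)) ∧
      (∀ x ∈ Set.Icc a ((a + b) / 2),
        HasDerivWithinAt u (u' x) (Set.Icc a ((a + b) / 2)) x) ∧
      (∀ x ∈ Set.Ico a ((a + b) / 2),
        u' x = Real.sqrt (M * (u x) ^ 2 * (1 - u x) ^ 2 + lam * (1 - (u x) ^ 2))) ∧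
      u' ((a + b) / 2) = 0 :=
  stmt12_general a b lam hab hlam M hM hMint Ψ hΨ u hmaps hleft hright
end
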